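/- arXiv:1807.02306 — 5 statements merged into one kernel-verified Lean document; each statement's English description precedes it below -/
import Mathlib

section
/- Let 𝐓 = [0,T], 𝐗 = [L,R], 𝐘 = [y̲,ȳ] be compact intervals, let f : ℝ → ℝ be continuous, let ν be a finite Borel measure on 𝐊 = 𝐓×𝐗×𝐘, and let λ_𝐘 denote the normalized Lebesgue measure on 𝐘. Let ϑ⁺ and ϑ⁻ be Borel measures on 𝐊×𝐘 with supp ϑ⁺ ⊆ {(t,x,λ,v) : λ ≥ v}, supp ϑ⁻ ⊆ {(t,x,λ,v) : λ ≤ v}, and ϑ⁺ + ϑ⁻ = ν ⊗ λ_𝐘. Suppose that for every nonnegative θ ∈ C(𝐘) and every nonnegative ψ ∈ C¹(𝐓×𝐗): ∫ θ(v)(∂_tψ(t,x)(λ−v) + ∂_xψ(t,x)(f(λ)−f(v))) dϑ⁺ + ∫ θ(v)(∂_tψ(t,x)(v−λ) + ∂_xψ(t,x)(f(v)−f(λ))) dϑ⁻ ≥ 0. Then for every nonnegative ψ ∈ C¹(𝐓×𝐗) and every v ∈ 𝐘: ∫_𝐊 (∂_tψ(t,x)|λ−v| + ∂_xψ(t,x)·sign(λ−v)(f(λ)−f(v)))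 dν(t,x,λ) ≥ 0, i.e. the Kruzkhov entropy inequalities for all parameters v are recovered. -/
/-!
On the support of `ϑ⁺` (where `λ ≥ v`) and on that of `ϑ⁻` (where `λ ≤ v`) the integrands of
`entropyExpr` both equal `θ(v)` times the Kruzkhov integrand
`ψ_t |λ - v| + ψ_x sign(λ - v) (f λ - f v)`. Since `ϑ⁺ + ϑ⁻ = ν ⊗ λ_𝐘`, Fubini turns the hypothesis
into `∫ θ g dλ_𝐘 ≥ 0` for every nonnegative continuous `θ`, where `g(v)` is the Kruzkhov entropy
integral with parameter `v`; `g` is continuous because `ν` is finite and concentrated on a compact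
set. Testing against the truncated negative part `min (g⁻) 1` gives `g ≥ 0` a.e. on `𝐘`, hence
everywhere on `𝐘` by continuity.
-/

open MeasureTheory Set

noncomputable section

/-- The entropy expression tested against `θ(v)` and `ψ(t,x)`; the integration
variables on `𝐊 × 𝐘` are `q = ((t, x, λ), v)`. -/
def entropyExpr (f : ℝ → ℝ) (ϑp ϑm : Measure ((ℝ × ℝ × ℝ) × ℝ))
    (ψ : ℝ × ℝ → ℝ) (θ : ℝ → ℝ) : ℝ :=
  (∫ q : (ℝ × ℝ × ℝ) × ℝ,
      θ q.2 * ((deriv (fun s => ψ (s, q.1.2.1)) q.1.1) * (q.1.2.2 - q.2)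
        + (deriv (fun z => ψ (q.1.1, z)) q.1.2.1) * (f q.1.2.2 - f q.2)) ∂ϑp)
    + (∫ q : (ℝ × ℝ × ℝ) × ℝ,
      θ q.2 * ((deriv (fun s => ψ (s, q.1.2.1)) q.1.1) * (q.2 - q.1.2.2)
        + (deriv (fun z => ψ (q.1.1, z)) q.1.2.1) * (f q.2 - f q.1.2.2)) ∂ϑm)

lemma Real.sign_sub_mul_sub_eq_max_min (f : ℝ → ℝ) (a b : ℝ) :
    Real.sign (a - b) * (f a - f b) = f (max a b) - f (min a b) := by
  rcases lt_trichotomy a b with h | rfl | h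
  · rw [Real.sign_of_neg (sub_neg.2 h), max_eq_right h.le, min_eq_left h.le]; ring
  · simp
  · rw [Real.sign_of_pos (sub_pos.2 h), max_eq_left h.le, min_eq_right h.le]; ring

namespace ContDiff

variable {ψ : ℝ × ℝ → ℝ}

lemma continuous_deriv_fst (hψ : ContDiff ℝ 1 ψ) :
    Continuous fun p : ℝ × ℝ => deriv (fun s => ψ (s, p.2)) p.1 := by
  have hpartial (p : ℝ × ℝ) : deriv (fun s => ψ (s, p.2)) p.1 = fderiv ℝ ψ p (1, 0) :=
    ((hψ.differentiable one_ne_zero p).hasFDerivAt.comp_hasDerivAt p.1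
      ((hasDerivAt_id p.1).prodMk (hasDerivAt_const p.1 p.2))).deriv
  simp only [hpartial]
  exact (hψ.continuous_fderiv one_ne_zero).clm_apply continuous_const

lemma continuous_deriv_snd (hψ : ContDiff ℝ 1 ψ) :
    Continuous fun p : ℝ × ℝ => deriv (fun z => ψ (p.1, z)) p.2 := by
  have hpartial (p : ℝ × ℝ) : deriv (fun z => ψ (p.1, z)) p.2 = fderiv ℝ ψ p (0, 1) :=
    ((hψ.differentiable one_ne_zero p).hasFDerivAt.comp_hasDerivAt p.2
      ((hasDerivAt_const p.2 p.1).prodMk (hasDerivAt_id p.2))).deriv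
  simp only [hpartial]
  exact (hψ.continuous_fderiv one_ne_zero).clm_apply continuous_const

end ContDiff

section ConcentratedOnCompact

variable {α : Type*} [TopologicalSpace α] [MeasurableSpace α] [OpensMeasurableSpace α]
  {μ : Measure α} {K : Set α}

lemma Continuous.integrable_of_ae_mem_isCompact [T2Space α] [IsFiniteMeasureOnCompacts μ]
    {g : α → ℝ} (hg : Continuous g) (hK : IsCompact K) (hμK : ∀ᵐ x ∂μ, x ∈ K) : Integrable g μ := by
  rw [← Measure.restrict_eq_self_of_ae_mem hμK]
  exact hg.continuousOn.integrableOn_compact hK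

lemma continuous_integral_of_ae_mem_isCompact [IsLocallyFiniteMeasure μ] {β : Type*}
    [TopologicalSpace β] [FirstCountableTopology β] [LocallyCompactSpace β]
    [SecondCountableTopology α]
    {F : β → α → ℝ} (hF : Continuous (Function.uncurry F)) (hK : IsCompact K)
    (hμK : ∀ᵐ x ∂μ, x ∈ K) : Continuous fun b => ∫ x, F b x ∂μ := by
  rw [← Measure.restrict_eq_self_of_ae_mem hμK]
  exact continuous_parametric_integral_of_continuous hF hK

end ConcentratedOnCompact

lemma ae_nonneg_of_forall_integral_mul_nonneg {α : Type*} [TopologicalSpace α]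
    [MeasurableSpace α] [OpensMeasurableSpace α] {μ : Measure α} {g : α → ℝ}
    (hg : Continuous g) (hgi : Integrable g μ)
    (h : ∀ θ : α → ℝ, Continuous θ → (∀ x, 0 ≤ θ x) → 0 ≤ ∫ x, θ x * g x ∂μ) :
    0 ≤ᵐ[μ] g := by
  set θ : α → ℝ := fun x => min (max (-g x) 0) 1
  have hθ0 (x : α) : 0 ≤ θ x := le_min (le_max_right _ _) zero_le_one
  have hθg (x : α) : 0 ≤ -(θ x * g x) := by
    rcases le_total 0 (g x) with hx | hx
    · simp [θ, max_eq_right (neg_nonpos.2 hx)]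
    · nlinarith [hθ0 x]
  have hint : Integrable (fun x => -(θ x * g x)) μ :=
    (hgi.bdd_mul (c := 1) (by fun_prop) (ae_of_all _ fun x => by
      rw [Real.norm_eq_abs, abs_of_nonneg (hθ0 x)]; exact min_le_right _ _)).neg
  have hzero : ∫ x, -(θ x * g x) ∂μ = 0 :=
    le_antisymm (by rw [integral_neg]; linarith [h θ (by fun_prop) hθ0]) (integral_nonneg hθg)
  filter_upwards [(integral_eq_zero_iff_of_nonneg hθg hint).1 hzero] with x hx
  by_contra! hneg
  have hθpos : 0 < θ x := lt_min (lt_max_of_lt_left (neg_pos.2 hneg)) zero_lt_one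
  exact neg_ne_zero.2 (mul_neg_of_pos_of_neg hθpos hneg).ne hx

lemma nonneg_on_Icc_of_ae_nonneg {α : Type*} [TopologicalSpace α] [LinearOrder α]
    [OrderTopology α] [DenselyOrdered α] [MeasurableSpace α] (μ : Measure α) [μ.IsOpenPosMeasure]
    {a b : α} (hab : a ≠ b) {g : α → ℝ} (hg : ContinuousOn g (Icc a b))
    (h : 0 ≤ᵐ[μ.restrict (Icc a b)] g) : ∀ x ∈ Icc a b, 0 ≤ g x := by
  have hmin : (fun x => min (g x) 0) =ᵐ[μ.restrict (Icc a b)] 0 :=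
    h.mono fun x hx => min_eq_right hx
  intro x hx
  exact min_eq_right_iff.1 (Measure.eqOn_Icc_of_ae_eq μ hab hmin
    (hg.inf continuousOn_const) continuousOn_const hx)

def kruzkhovIntegrand (f : ℝ → ℝ) (ψ : ℝ × ℝ → ℝ) (v : ℝ) (p : ℝ × ℝ × ℝ) : ℝ :=
  deriv (fun s => ψ (s, p.2.1)) p.1 * |p.2.2 - v|
    + deriv (fun z => ψ (p.1, z)) p.2.1 * (Real.sign (p.2.2 - v) * (f p.2.2 - f v))

section Kruzkhov

variable {f : ℝ → ℝ} {ψ : ℝ × ℝ → ℝ}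

lemma continuous_kruzkhovIntegrand (hf : Continuous f) (hψ : ContDiff ℝ 1 ψ) :
    Continuous (Function.uncurry (kruzkhovIntegrand f ψ)) := by
  simp only [Function.uncurry_def, kruzkhovIntegrand, Real.sign_sub_mul_sub_eq_max_min]
  have hproj : Continuous fun p : ℝ × ℝ × ℝ × ℝ => (p.2.1, p.2.2.1) := by fun_prop
  have hψt := hψ.continuous_deriv_fst.comp hproj
  have hψx := hψ.continuous_deriv_snd.comp hproj
  simp only [Function.comp_def] at hψt hψx
  fun_prop

lemma kruzkhovIntegrand_of_le {v : ℝ} {p : ℝ × ℝ × ℝ} (h : v ≤ p.2.2) :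
    kruzkhovIntegrand f ψ v p = deriv (fun s => ψ (s, p.2.1)) p.1 * (p.2.2 - v)
      + deriv (fun z => ψ (p.1, z)) p.2.1 * (f p.2.2 - f v) := by
  rw [kruzkhovIntegrand, Real.sign_sub_mul_sub_eq_max_min, abs_of_nonneg (sub_nonneg.2 h),
    max_eq_left h, min_eq_right h]

lemma kruzkhovIntegrand_of_ge {v : ℝ} {p : ℝ × ℝ × ℝ} (h : p.2.2 ≤ v) :
    kruzkhovIntegrand f ψ v p = deriv (fun s => ψ (s, p.2.1)) p.1 * (v - p.2.2)
      + deriv (fun z => ψ (p.1, z)) p.2.1 * (f v - f p.2.2) := by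
  rw [kruzkhovIntegrand, Real.sign_sub_mul_sub_eq_max_min, abs_of_nonpos (sub_nonpos.2 h),
    max_eq_right h, min_eq_left h, neg_sub]

lemma entropyExpr_eq_integral_prod {ϑp ϑm : Measure ((ℝ × ℝ × ℝ) × ℝ)}
    (hϑp : ϑp {q | q.1.2.2 < q.2} = 0) (hϑm : ϑm {q | q.2 < q.1.2.2} = 0)
    {ν : Measure (ℝ × ℝ × ℝ)} [SFinite ν] {μ : Measure ℝ} [SFinite μ]
    (hsum : ϑp + ϑm = ν.prod μ) {θ : ℝ → ℝ}
    (hint : Integrable (fun q => θ q.2 * kruzkhovIntegrand f ψ q.2 q.1) (ν.prod μ)) :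
    entropyExpr f ϑp ϑm ψ θ = ∫ v, θ v * ∫ p, kruzkhovIntegrand f ψ v p ∂ν ∂μ := by
  rw [← hsum] at hint
  have hp : ∀ᵐ q ∂ϑp, q.2 ≤ q.1.2.2 := by
    rw [ae_iff]; simpa only [not_le] using hϑp
  have hm : ∀ᵐ q ∂ϑm, q.1.2.2 ≤ q.2 := by
    rw [ae_iff]; simpa only [not_le] using hϑm
  rw [entropyExpr,
    integral_congr_ae (hp.mono fun q hq =>
      congrArg (θ q.2 * ·) (kruzkhovIntegrand_of_le hq).symm),
    integral_congr_ae (hm.mono fun q hq =>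
      congrArg (θ q.2 * ·) (kruzkhovIntegrand_of_ge hq).symm),
    ← integral_add_measure (hint.mono_measure (Measure.le_add_right le_rfl))
      (hint.mono_measure (Measure.le_add_left le_rfl)), hsum, integral_prod_symm _ (hsum ▸ hint)]
  exact integral_congr_ae (ae_of_all _ fun v => integral_const_mul (θ v) _)

end Kruzkhov

theorem kruzkhov_entropies_recovered_general
    (T L R ylo yhi : ℝ) (hY : ylo < yhi)
    (f : ℝ → ℝ) (hf : Continuous f)
    (ν : Measure (ℝ × ℝ × ℝ)) [IsFiniteMeasure ν]
    (hν : ν ((Icc 0 T ×ˢ (Icc L R ×ˢ Icc ylo yhi))ᶜ) = 0)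
    (ϑp ϑm : Measure ((ℝ × ℝ × ℝ) × ℝ))
    (hϑp : ϑp {q : (ℝ × ℝ × ℝ) × ℝ | q.1.2.2 < q.2} = 0)
    (hϑm : ϑm {q : (ℝ × ℝ × ℝ) × ℝ | q.2 < q.1.2.2} = 0)
    (hsum : ϑp + ϑm
      = ν.prod ((ENNReal.ofReal (yhi - ylo))⁻¹ • volume.restrict (Icc ylo yhi)))
    (H : ∀ θ : ℝ → ℝ, Continuous θ → (∀ v ∈ Icc ylo yhi, 0 ≤ θ v) →
      ∀ ψ : ℝ × ℝ → ℝ, ContDiff ℝ 1 ψ →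
        (∀ t ∈ Icc 0 T, ∀ x ∈ Icc L R, 0 ≤ ψ (t, x)) →
        0 ≤ entropyExpr f ϑp ϑm ψ θ) :
    ∀ ψ : ℝ × ℝ → ℝ, ContDiff ℝ 1 ψ →
      (∀ t ∈ Icc 0 T, ∀ x ∈ Icc L R, 0 ≤ ψ (t, x)) →
      ∀ v ∈ Icc ylo yhi,
        0 ≤ ∫ p : ℝ × ℝ × ℝ,
          ((deriv (fun s => ψ (s, p.2.1)) p.1) * |p.2.2 - v|
            + (deriv (fun z => ψ (p.1, z)) p.2.1)
              * (Real.sign (p.2.2 - v) * (f p.2.2 - f v))) ∂ν := by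
  intro ψ hψ hψ0 v hv
  set K := Icc 0 T ×ˢ (Icc L R ×ˢ Icc ylo yhi)
  have hKc : IsCompact K := isCompact_Icc.prod (isCompact_Icc.prod isCompact_Icc)
  have hc : (ENNReal.ofReal (yhi - ylo))⁻¹ ≠ 0 := ENNReal.inv_ne_zero.2 ENNReal.ofReal_ne_top
  set μ := (ENNReal.ofReal (yhi - ylo))⁻¹ • volume.restrict (Icc ylo yhi)
  have : IsFiniteMeasure μ := Measure.smul_finite _ (by simpa using hY)
  have hμ : ∀ᵐ w ∂μ, w ∈ Icc ylo yhi :=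
    (Measure.ae_ennreal_smul_measure_iff hc).2 (ae_restrict_mem measurableSet_Icc)
  have hκ := continuous_kruzkhovIntegrand hf hψ
  set g := fun w => ∫ p, kruzkhovIntegrand f ψ w p ∂ν
  have hg : Continuous g := continuous_integral_of_ae_mem_isCompact hκ hKc (ae_iff.2 hν)
  have hθg (θ : ℝ → ℝ) (hθ : Continuous θ) (hθ0 : ∀ w, 0 ≤ θ w) :
      0 ≤ ∫ w, θ w * g w ∂μ := by
    have hint : Integrable (fun q => θ q.2 * kruzkhovIntegrand f ψ q.2 q.1) (ν.prod μ) :=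
      ((hθ.comp continuous_snd).mul (hκ.comp continuous_swap)).integrable_of_ae_mem_isCompact
        (hKc.prod isCompact_Icc)
        (ae_iff.2 (Measure.measure_prod_compl_eq_zero hν (ae_iff.1 hμ)))
    rw [← entropyExpr_eq_integral_prod hϑp hϑm hsum hint]
    exact H θ hθ (fun w _ => hθ0 w) ψ hψ hψ0
  have hgμ : 0 ≤ᵐ[μ] g := ae_nonneg_of_forall_integral_mul_nonneg hg
    (hg.integrable_of_ae_mem_isCompact isCompact_Icc hμ) hθg
  exact nonneg_on_Icc_of_ae_nonneg volume hY.ne hg.continuousOn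
    ((Measure.ae_ennreal_smul_measure_iff hc).1 hgμ) v hv

/-- Recovering all Kruzkhov entropy inequalities from the split measures
`ϑ⁺, ϑ⁻` with `ϑ⁺ + ϑ⁻ = ν ⊗ λ_𝐘` (Lemma 2 of the paper). -/
theorem kruzkhov_entropies_recovered
    (T L R ylo yhi : ℝ) (hT : 0 < T) (hLR : L < R) (hY : ylo < yhi)
    (f : ℝ → ℝ) (hf : Continuous f)
    (ν : Measure (ℝ × ℝ × ℝ)) [IsFiniteMeasure ν]
    (hν : ν ((Icc 0 T ×ˢ (Icc L R ×ˢ Icc ylo yhi))ᶜ) = 0)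
    (ϑp ϑm : Measure ((ℝ × ℝ × ℝ) × ℝ))
    (hϑp : ϑp {q : (ℝ × ℝ × ℝ) × ℝ | q.1.2.2 < q.2} = 0)
    (hϑm : ϑm {q : (ℝ × ℝ × ℝ) × ℝ | q.2 < q.1.2.2} = 0)
    (hsum : ϑp + ϑm
      = ν.prod ((ENNReal.ofReal (yhi - ylo))⁻¹ • volume.restrict (Icc ylo yhi)))
    (H : ∀ θ : ℝ → ℝ, Continuous θ → (∀ v ∈ Icc ylo yhi, 0 ≤ θ v) →
      ∀ ψ : ℝ × ℝ → ℝ, ContDiff ℝ 1 ψ →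
        (∀ t ∈ Icc 0 T, ∀ x ∈ Icc L R, 0 ≤ ψ (t, x)) →
        0 ≤ entropyExpr f ϑp ϑm ψ θ) :
    ∀ ψ : ℝ × ℝ → ℝ, ContDiff ℝ 1 ψ →
      (∀ t ∈ Icc 0 T, ∀ x ∈ Icc L R, 0 ≤ ψ (t, x)) →
      ∀ v ∈ Icc ylo yhi,
        0 ≤ ∫ p : ℝ × ℝ × ℝ,
          ((deriv (fun s => ψ (s, p.2.1)) p.1) * |p.2.2 - v|
            + (deriv (fun z => ψ (p.1, z)) p.2.1)
              * (Real.sign (p.2.2 - v) * (f p.2.2 - f v))) ∂ν :=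
  kruzkhov_entropies_recovered_general T L R ylo yhi hY f hf ν hν ϑp ϑm hϑp hϑm hsum H
end
end

section
/- Handelman's Positivstellensatz for a rectangle: let T > 0 and L < R, and let p ∈ ℝ[t,x] be a polynomial that is strictly positive at every point of [0,T]×[L,R]. Then there exist finitely many multi-indices α = (α₁,α₂,α₃,α₄) ∈ ℕ⁴ and strictly positive real coefficients c_α such that p(t,x) = Σ_α c_α · t^{α₁}(T−t)^{α₂}(x−L)^{α₃}(R−x)^{α₄} identically. -/
/-!
After an affine change of variables it suffices to show that, for a polynomial `q` positive on
the unit square and `n` large, all coefficients of `q` in the tensor-product Bernstein basis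
`u ^ i * (1 - u) ^ (n - i) * v ^ j * (1 - v) ^ (n - j)` are positive; undoing the change of
variables turns these basis elements into positive multiples of
`t ^ i * (T - t) ^ (n - i) * (x - L) ^ j * (R - x) ^ (n - j)`.

Expanding `u ^ k * (u + (1 - u)) ^ (n - k)` shows that the coefficient of `u ^ k` on the `i`-th
basis element is `choose i k / choose n k`, a ratio of falling factorials that is within `k² / n`
of `(i / n) ^ k`. Hence the Bernstein coefficients of `q` differ from the grid values
`q (i / n, j / n) ≥ min q > 0` by `O(1 / n)`.
-/

open Set Finset MvPolynomial

theorem Nat.descFactorial_mul_choose_eq (k m r : ℕ) :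
    (k + r).descFactorial k * r.choose m = (k + m).descFactorial k * (k + r).choose (k + m) := by
  rw [Nat.descFactorial_eq_factorial_mul_choose, Nat.descFactorial_eq_factorial_mul_choose,
    mul_assoc, mul_assoc, mul_comm ((k + m).choose k), Nat.choose_mul (Nat.le_add_right k m)]
  simp

theorem descFactorial_mul_pow_mul_add_pow_eq_sum {R : Type*} [CommSemiring R] (n k : ℕ)
    (u v : R) :
    (n.descFactorial k : R) * u ^ k * (u + v) ^ (n - k) =
      ∑ i ∈ range (n + 1), (i.descFactorial k : R) * n.choose i * u ^ i * v ^ (n - i) := by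
  obtain hnk | hkn := lt_or_ge n k
  · refine ((sum_eq_zero fun i hi => ?_).trans ?_).symm
    · rw [Nat.descFactorial_eq_zero_iff_lt.2 (by grind)]
      simp
    · simp [Nat.descFactorial_eq_zero_iff_lt.2 hnk]
  obtain ⟨r, rfl⟩ := Nat.exists_eq_add_of_le hkn
  have hlow : ∀ i ∈ range k,
      (i.descFactorial k : R) * (k + r).choose i * u ^ i * v ^ (k + r - i) = 0 :=
    fun i hi => by simp [Nat.descFactorial_eq_zero_iff_lt.2 (Finset.mem_range.1 hi)]
  rw [show k + r + 1 = k + (r + 1) from rfl, sum_range_add, sum_eq_zero hlow, zero_add,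
    Nat.add_sub_cancel_left, add_pow, mul_sum]
  refine sum_congr rfl fun m _ => ?_
  rw [Nat.add_sub_add_left, pow_add]
  calc _ = (((k + r).descFactorial k * r.choose m : ℕ) : R) * (u ^ k * u ^ m * v ^ (r - m)) := by
        push_cast
        ring
    _ = _ := by
        rw [Nat.descFactorial_mul_choose_eq]
        push_cast
        ring

theorem cast_sub_div_cast_sub_le {i l n : ℕ} (hin : i ≤ n) (hln : l < n) :
    ((i - l : ℕ) : ℝ) / (n - l : ℕ) ≤ i / n := by
  obtain hil | hli := lt_or_ge i l
  · simp only [Nat.sub_eq_zero_of_le hil.le, Nat.cast_zero, zero_div]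
    positivity
  have hn : (0 : ℝ) < n := by exact_mod_cast hln.pos
  have hnl : (l : ℝ) < n := by exact_mod_cast hln
  rw [Nat.cast_sub hli, Nat.cast_sub hln.le, div_le_div_iff₀ (by linarith) hn]
  have : (i : ℝ) ≤ n := by exact_mod_cast hin
  nlinarith [(l.cast_nonneg : (0 : ℝ) ≤ l)]

theorem div_sub_cast_sub_div_cast_sub_le {i l n : ℕ} (hln : l < n) :
    (i : ℝ) / n - ((i - l : ℕ) : ℝ) / (n - l : ℕ) ≤ l / n := by
  have hn : (0 : ℝ) < n := by exact_mod_cast hln.pos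
  obtain hil | hli := lt_or_ge i l
  · simp only [Nat.sub_eq_zero_of_le hil.le, Nat.cast_zero, zero_div, sub_zero]
    gcongr
  have hnl : (l : ℝ) < n := by exact_mod_cast hln
  rw [Nat.cast_sub hli, Nat.cast_sub hln.le, div_sub_div _ _ hn.ne' (by linarith),
    div_le_div_iff₀ (by nlinarith) hn]
  have : (l : ℝ) ≤ i := by exact_mod_cast hli
  nlinarith [mul_nonneg (mul_nonneg l.cast_nonneg hn.le) (sub_nonneg.2 this)]

noncomputable def bernsteinCoeff (n k i : ℕ) : ℝ := i.descFactorial k / n.descFactorial k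

theorem bernsteinCoeff_nonneg (n k i : ℕ) : 0 ≤ bernsteinCoeff n k i := by
  unfold bernsteinCoeff; positivity

theorem bernsteinCoeff_succ (n k i : ℕ) :
    bernsteinCoeff n (k + 1) i = bernsteinCoeff n k i * (((i - k : ℕ) : ℝ) / (n - k : ℕ)) := by
  simp only [bernsteinCoeff, Nat.descFactorial_succ, Nat.cast_mul, mul_div_mul_comm, mul_comm]

theorem bernsteinCoeff_le_pow {n k i : ℕ} (hin : i ≤ n) (hkn : k ≤ n) :
    bernsteinCoeff n k i ≤ ((i : ℝ) / n) ^ k := by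
  induction k with
  | zero => simp [bernsteinCoeff]
  | succ k ih =>
    rw [bernsteinCoeff_succ, pow_succ]
    exact mul_le_mul (ih (by omega)) (cast_sub_div_cast_sub_le hin (by omega)) (by positivity)
      (by positivity)

theorem pow_sub_bernsteinCoeff_le {n k i : ℕ} (hin : i ≤ n) (hkn : k ≤ n) :
    ((i : ℝ) / n) ^ k - bernsteinCoeff n k i ≤ k ^ 2 / n := by
  induction k with
  | zero => simp [bernsteinCoeff]
  | succ k ih =>
    have hx : (i : ℝ) / n ≤ 1 := div_le_one_of_le₀ (by exact_mod_cast hin) (by positivity)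
    have hxk : ((i : ℝ) / n) ^ k ≤ 1 := pow_le_one₀ (by positivity) hx
    have hf := cast_sub_div_cast_sub_le hin (l := k) (by omega)
    have hgap := div_sub_cast_sub_div_cast_sub_le (i := i) (l := k) (n := n) (by omega)
    have hA := bernsteinCoeff_le_pow hin (k := k) (by omega)
    rw [bernsteinCoeff_succ, pow_succ]
    calc ((i : ℝ) / n) ^ k * (i / n) - bernsteinCoeff n k i * ((i - k : ℕ) / (n - k : ℕ))
        = ((i : ℝ) / n) ^ k * (i / n - (i - k : ℕ) / (n - k : ℕ))
          + (((i : ℝ) / n) ^ k - bernsteinCoeff n k i) * ((i - k : ℕ) / (n - k : ℕ)) := by ring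
      _ ≤ 1 * (k / n) + (k ^ 2 / n) * 1 := by
        have := sub_nonneg.2 hA
        have := hf.trans hx
        gcongr
        exact ih (by omega)
      _ ≤ ((k + 1 : ℕ) : ℝ) ^ 2 / n := by
        push_cast
        rw [one_mul, mul_one, ← add_div]
        gcongr
        nlinarith [(k.cast_nonneg : (0 : ℝ) ≤ k)]

theorem pow_eq_sum_bernsteinCoeff {n k : ℕ} (hkn : k ≤ n) {u v : ℝ} (huv : u + v = 1) :
    u ^ k = ∑ i ∈ range (n + 1), bernsteinCoeff n k i * n.choose i * u ^ i * v ^ (n - i) := by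
  have hd : (n.descFactorial k : ℝ) ≠ 0 := by
    exact_mod_cast (Nat.descFactorial_pos.2 hkn).ne'
  have h := descFactorial_mul_pow_mul_add_pow_eq_sum n k u v
  rw [huv, one_pow, mul_one] at h
  refine mul_left_cancel₀ hd ?_
  rw [h, mul_sum]
  refine sum_congr rfl fun i _ => ?_
  rw [bernsteinCoeff]
  field_simp

theorem abs_pow_mul_pow_sub_bernsteinCoeff_mul_le {n k l i j : ℕ} (hin : i ≤ n) (hjn : j ≤ n)
    (hkln : k + l ≤ n) :
    |((i : ℝ) / n) ^ k * ((j : ℝ) / n) ^ l - bernsteinCoeff n k i * bernsteinCoeff n l j|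
      ≤ (k + l) ^ 2 / n := by
  have hy : ((j : ℝ) / n) ^ l ≤ 1 :=
    pow_le_one₀ (by positivity) (div_le_one_of_le₀ (by exact_mod_cast hjn) (by positivity))
  have hA := bernsteinCoeff_le_pow hin (k := k) (by omega)
  have hB := bernsteinCoeff_le_pow hjn (k := l) (by omega)
  have hA1 : bernsteinCoeff n k i ≤ 1 := hA.trans
    (pow_le_one₀ (by positivity) (div_le_one_of_le₀ (by exact_mod_cast hin) (by positivity)))
  have hsplit :
      ((i : ℝ) / n) ^ k * ((j : ℝ) / n) ^ l - bernsteinCoeff n k i * bernsteinCoeff n l j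
        = (((i : ℝ) / n) ^ k - bernsteinCoeff n k i) * ((j : ℝ) / n) ^ l
        + bernsteinCoeff n k i * (((j : ℝ) / n) ^ l - bernsteinCoeff n l j) := by ring
  have hA0 := bernsteinCoeff_nonneg n k i
  rw [hsplit, abs_of_nonneg (by nlinarith [bernsteinCoeff_nonneg n l j])]
  calc _ ≤ (k ^ 2 / n : ℝ) * 1 + 1 * (l ^ 2 / n) := by
        have := pow_sub_bernsteinCoeff_le hin (k := k) (by omega)
        have := pow_sub_bernsteinCoeff_le hjn (k := l) (by omega)
        have := sub_nonneg.2 hA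
        have := sub_nonneg.2 hB
        gcongr
    _ ≤ (k + l) ^ 2 / n := by
      rw [one_mul, mul_one, ← add_div]
      gcongr
      nlinarith [(k.cast_nonneg : (0 : ℝ) ≤ k), (l.cast_nonneg : (0 : ℝ) ≤ l)]

namespace MvPolynomial

theorem eval_fin_two_eq_sum {R : Type*} [CommSemiring R] (q : MvPolynomial (Fin 2) R)
    (u v : R) :
    eval ![u, v] q = ∑ m ∈ q.support, coeff m q * (u ^ m 0 * v ^ m 1) := by
  simp [eval_eq', Fin.prod_univ_two]

theorem add_le_totalDegree_of_mem_support {R : Type*} [CommSemiring R]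
    {q : MvPolynomial (Fin 2) R} {m : Fin 2 →₀ ℕ} (hm : m ∈ q.support) :
    m 0 + m 1 ≤ q.totalDegree := by
  simpa [Finsupp.sum_fintype] using le_totalDegree hm

theorem eval_eval₂_affine {R : Type*} [CommRing R] (p : MvPolynomial (Fin 2) R)
    (a s c r u v : R) :
    eval ![u, v] (eval₂ C ![C a + C s * X 0, C c + C r * X 1] p)
      = eval ![a + s * u, c + r * v] p := by
  rw [← eval_assoc]
  congr 2
  funext k
  fin_cases k <;> simp

end MvPolynomial

noncomputable def bernsteinCoeff₂ (n : ℕ) (q : MvPolynomial (Fin 2) ℝ) (i j : ℕ) : ℝ :=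
  ∑ m ∈ q.support, coeff m q * bernsteinCoeff n (m 0) i * bernsteinCoeff n (m 1) j

theorem eval_eq_sum_bernsteinCoeff₂ {n : ℕ} {q : MvPolynomial (Fin 2) ℝ}
    (hq : q.totalDegree ≤ n) {u u' v v' : ℝ} (hu : u + u' = 1) (hv : v + v' = 1) :
    eval ![u, v] q = ∑ i ∈ range (n + 1), ∑ j ∈ range (n + 1), bernsteinCoeff₂ n q i j
      * (n.choose i * u ^ i * u' ^ (n - i)) * (n.choose j * v ^ j * v' ^ (n - j)) := by
  simp only [bernsteinCoeff₂, sum_mul]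
  conv_rhs => enter [2, i]; rw [sum_comm]
  rw [sum_comm, eval_fin_two_eq_sum]
  refine sum_congr rfl fun m hm => ?_
  have hdeg := add_le_totalDegree_of_mem_support hm
  rw [pow_eq_sum_bernsteinCoeff (n := n) (by omega) hu,
    pow_eq_sum_bernsteinCoeff (n := n) (by omega) hv, sum_mul_sum, mul_sum]
  refine sum_congr rfl fun i _ => ?_
  rw [mul_sum]
  refine sum_congr rfl fun j _ => ?_
  ring

theorem eval_sub_bernsteinCoeff₂_le {n i j : ℕ} {q : MvPolynomial (Fin 2) ℝ}
    (hq : q.totalDegree ≤ n) (hin : i ≤ n) (hjn : j ≤ n) :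
    eval ![(i : ℝ) / n, (j : ℝ) / n] q - bernsteinCoeff₂ n q i j
      ≤ (∑ m ∈ q.support, |coeff m q|) * q.totalDegree ^ 2 / n := by
  rw [eval_fin_two_eq_sum, bernsteinCoeff₂, ← sum_sub_distrib, sum_mul, sum_div]
  refine sum_le_sum fun m hm => ?_
  have hdeg := add_le_totalDegree_of_mem_support hm
  calc _ = coeff m q * (((i : ℝ) / n) ^ m 0 * ((j : ℝ) / n) ^ m 1
        - bernsteinCoeff n (m 0) i * bernsteinCoeff n (m 1) j) := by ring
    _ ≤ |coeff m q| * ((m 0 + m 1) ^ 2 / n) := by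
      refine (le_abs_self _).trans ?_
      rw [abs_mul]
      gcongr
      exact abs_pow_mul_pow_sub_bernsteinCoeff_mul_le hin hjn (by omega)
    _ ≤ |coeff m q| * q.totalDegree ^ 2 / n := by
      rw [mul_div_assoc]
      gcongr
      exact_mod_cast hdeg

theorem eventually_bernsteinCoeff₂_pos {q : MvPolynomial (Fin 2) ℝ}
    (hq : ∀ u ∈ Icc (0 : ℝ) 1, ∀ v ∈ Icc (0 : ℝ) 1, 0 < eval ![u, v] q) :
    ∀ᶠ n in Filter.atTop,
      q.totalDegree ≤ n ∧ ∀ i ≤ n, ∀ j ≤ n, 0 < bernsteinCoeff₂ n q i j := by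
  have hcont : Continuous fun z : ℝ × ℝ => eval ![z.1, z.2] q :=
    (continuous_eval q).comp (by fun_prop)
  obtain ⟨δ, hδ, hδq⟩ := (isCompact_Icc.prod isCompact_Icc).exists_forall_le'
    hcont.continuousOn fun z hz => hq z.1 hz.1 z.2 hz.2
  have hM : 0 ≤ ∑ m ∈ q.support, |coeff m q| := sum_nonneg fun _ _ => abs_nonneg _
  obtain ⟨N, hN⟩ := exists_nat_gt ((∑ m ∈ q.support, |coeff m q|) * q.totalDegree ^ 2 / δ)
  refine Filter.eventually_atTop.2
    ⟨max N q.totalDegree, fun n hn => ⟨le_of_max_le_right hn, ?_⟩⟩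
  intro i hin j hjn
  have hNn : (∑ m ∈ q.support, |coeff m q|) * q.totalDegree ^ 2 / δ < n :=
    hN.trans_le (by exact_mod_cast le_of_max_le_left hn)
  have hn0 : (0 : ℝ) < n := (div_nonneg (mul_nonneg hM (by positivity)) hδ.le).trans_lt hNn
  have herr : (∑ m ∈ q.support, |coeff m q|) * q.totalDegree ^ 2 / n < δ := by
    rw [div_lt_iff₀ hδ] at hNn
    rw [div_lt_iff₀ hn0]
    linarith
  have hgrid : ∀ k ≤ n, (k : ℝ) / n ∈ Icc (0 : ℝ) 1 :=
    fun k hk => ⟨by positivity, div_le_one_of_le₀ (by exact_mod_cast hk) hn0.le⟩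
  have hδij : δ ≤ eval ![(i : ℝ) / n, (j : ℝ) / n] q := hδq (_, _) ⟨hgrid i hin, hgrid j hjn⟩
  linarith [eval_sub_bernsteinCoeff₂_le (le_of_max_le_right hn) hin hjn]

theorem exists_bernstein_repr_of_pos_on_rectangle {a b c d : ℝ} (hab : a < b) (hcd : c < d)
    {p : MvPolynomial (Fin 2) ℝ} (hp : ∀ t ∈ Icc a b, ∀ x ∈ Icc c d, 0 < eval ![t, x] p) :
    ∃ (n : ℕ) (β : ℕ → ℕ → ℝ), (∀ i ≤ n, ∀ j ≤ n, 0 < β i j) ∧ ∀ t x : ℝ,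
      eval ![t, x] p = ∑ i ∈ range (n + 1), ∑ j ∈ range (n + 1),
        β i j * (t - a) ^ i * (b - t) ^ (n - i) * (x - c) ^ j * (d - x) ^ (n - j) := by
  obtain ⟨q, hq⟩ : ∃ q : MvPolynomial (Fin 2) ℝ,
      ∀ u v, eval ![u, v] q = eval ![a + (b - a) * u, c + (d - c) * v] p :=
    ⟨_, eval_eval₂_affine p a (b - a) c (d - c)⟩
  obtain ⟨n, hqn, hpos⟩ := (eventually_bernsteinCoeff₂_pos (q := q) fun u hu v hv => by
    rw [hq]
    exact hp _ ⟨by nlinarith [hu.1], by nlinarith [hu.2]⟩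
      _ ⟨by nlinarith [hv.1], by nlinarith [hv.2]⟩).exists
  have hba : b - a ≠ 0 := sub_ne_zero.2 hab.ne'
  have hdc : d - c ≠ 0 := sub_ne_zero.2 hcd.ne'
  refine ⟨n, fun i j =>
    bernsteinCoeff₂ n q i j * n.choose i * n.choose j / ((b - a) ^ n * (d - c) ^ n),
    fun i hi j hj => ?_, fun t x => ?_⟩
  · have := hpos i hi j hj
    have := Nat.choose_pos hi
    have := Nat.choose_pos hj
    have := sub_pos.2 hab
    have := sub_pos.2 hcd
    positivity
  · have h := eval_eq_sum_bernsteinCoeff₂ hqn (u := (t - a) / (b - a)) (u' := (b - t) / (b - a))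
      (v := (x - c) / (d - c)) (v' := (d - x) / (d - c)) (by field_simp; ring) (by field_simp; ring)
    rw [hq, mul_div_cancel₀ _ hba, mul_div_cancel₀ _ hdc, add_sub_cancel, add_sub_cancel] at h
    rw [h]
    refine sum_congr rfl fun i hi => sum_congr rfl fun j hj => ?_
    rw [Finset.mem_range] at hi hj
    have hbn : (b - a) ^ n = (b - a) ^ i * (b - a) ^ (n - i) := by
      rw [← pow_add, Nat.add_sub_cancel' (by omega)]
    have hdn : (d - c) ^ n = (d - c) ^ j * (d - c) ^ (n - j) := by
      rw [← pow_add, Nat.add_sub_cancel' (by omega)]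
    simp only [div_pow, hbn, hdn]
    field_simp

/-- Handelman's Positivstellensatz on the rectangle `[0,T] × [L,R]`: every
polynomial strictly positive on the rectangle is a finite positive linear
combination of products of powers of the affine generators
`t, T−t, x−L, R−x`. -/
theorem handelman_rectangle
    (T L R : ℝ) (hT : 0 < T) (hLR : L < R)
    (p : MvPolynomial (Fin 2) ℝ)
    (hp : ∀ t ∈ Icc 0 T, ∀ x ∈ Icc L R, 0 < MvPolynomial.eval ![t, x] p) :
    ∃ (S : Finset (ℕ × ℕ × ℕ × ℕ)) (c : ℕ × ℕ × ℕ × ℕ → ℝ),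
      (∀ α ∈ S, 0 < c α) ∧
      ∀ t x : ℝ, MvPolynomial.eval ![t, x] p =
        ∑ α ∈ S, c α * t ^ α.1 * (T - t) ^ α.2.1
          * (x - L) ^ α.2.2.1 * (R - x) ^ α.2.2.2 := by
  obtain ⟨n, β, hβ, hrepr⟩ := exists_bernstein_repr_of_pos_on_rectangle hT hLR hp
  refine ⟨(range (n + 1) ×ˢ range (n + 1)).image fun ij => (ij.1, n - ij.1, ij.2, n - ij.2),
    fun α => β α.1 α.2.2.1, ?_, fun t x => ?_⟩
  · simp only [Finset.mem_image, Finset.mem_product, Finset.mem_range]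
    rintro _ ⟨⟨i, j⟩, ⟨hi, hj⟩, rfl⟩
    exact hβ i (by omega) j (by omega)
  · have hinj : Set.InjOn (fun ij : ℕ × ℕ => (ij.1, n - ij.1, ij.2, n - ij.2))
        ↑(range (n + 1) ×ˢ range (n + 1)) :=
      fun ij _ ij' _ h => Prod.ext (congrArg (·.1) h) (congrArg (·.2.2.1) h)
    rw [sum_image hinj, sum_product, hrepr]
    simp only [sub_zero]
end

section
/- Putinar's Positivstellensatz: let g₁,…,g_m ∈ ℝ[w₁,…,w_n] with g₁(w) = N − Σ_{i=1}^n w_i² for some N ∈ ℕ, set g₀ = 1, and let 𝐊 = {w ∈ ℝⁿ : g₁(w) ≥ 0, …, g_m(w) ≥ 0}. If p ∈ ℝ[w₁,…,w_n] is strictly positive at every point of 𝐊, then there exist sums of squares of polynomials s₀, s₁, …, s_m ∈ ℝ[w₁,…,w_n] such that p = Σ_{j=0}^m s_j·g_j. -/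
/-!
The quadratic module `T` generated by the `gⱼ` is Archimedean: `N - ∑ wᵢ² ∈ T` bounds every
coordinate, and the elements bounded by `T` form a subalgebra. For an Archimedean quadratic module
not containing `-1`, a maximal such extension `M` satisfies `M ∪ -M = ℝ[w]`, and the cut
`f ↦ inf {r | r - f ∈ M}` is then an `ℝ`-algebra map `ℝ[w] → ℝ`, i.e. evaluation at a point
where all of `M` is nonnegative. Since `p ≥ ε > 0` on the compact set `𝐊`, adjoining
`-(p - ε/2)` to `T` leaves no such point, so `-1 = t - s (p - ε/2)` with `t ∈ T` and `s` a sum of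
squares. A geometric-series argument in the Archimedean module `T` then removes the multiplier `s`.
-/

open MvPolynomial

variable {R : Type*} [CommRing R]

structure IsQuadraticModule (M : Set R) : Prop where
  one_mem : 1 ∈ M
  add_mem {a b : R} : a ∈ M → b ∈ M → a + b ∈ M
  sq_mul_mem (f : R) {a : R} : a ∈ M → f ^ 2 * a ∈ M

def quadraticModuleAdjoin (M : Set R) (a : R) : Set R :=
  {x | ∃ m ∈ M, ∃ s, IsSumSq s ∧ x = m + s * a}

def quadraticModuleSpan {m : ℕ} (g : Fin m → R) : Set R :=
  {f | ∃ s : Fin (m + 1) → R, (∀ j, IsSumSq (s j)) ∧ f = s 0 + ∑ j : Fin m, s j.succ * g j}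

theorem subset_quadraticModuleAdjoin (M : Set R) (a : R) : M ⊆ quadraticModuleAdjoin M a :=
  fun x hx => ⟨x, hx, 0, .zero, by ring⟩

theorem isQuadraticModule_sUnion {c : Set (Set R)} (hc : ∀ M ∈ c, IsQuadraticModule M)
    (hchain : IsChain (· ⊆ ·) c) (hne : c.Nonempty) : IsQuadraticModule (⋃₀ c) where
  one_mem := let ⟨M, hM⟩ := hne; ⟨M, hM, (hc M hM).one_mem⟩
  add_mem := by
    rintro a b ⟨Ma, hMa, ha⟩ ⟨Mb, hMb, hb⟩
    rcases hchain.total hMa hMb with hab | hba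
    · exact ⟨Mb, hMb, (hc Mb hMb).add_mem (hab ha) hb⟩
    · exact ⟨Ma, hMa, (hc Ma hMa).add_mem ha (hba hb)⟩
  sq_mul_mem f := by
    rintro a ⟨M, hM, ha⟩
    exact ⟨M, hM, (hc M hM).sq_mul_mem f ha⟩

theorem IsQuadraticModule.exists_maximal {Q : Set R} (hQ : IsQuadraticModule Q)
    (hQ1 : (-1 : R) ∉ Q) :
    ∃ M, Q ⊆ M ∧ Maximal (fun M : Set R => IsQuadraticModule M ∧ (-1 : R) ∉ M) M := by
  refine zorn_subset_nonempty _ (fun c hc hchain hne => ?_) Q ⟨hQ, hQ1⟩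
  refine ⟨⋃₀ c, ⟨isQuadraticModule_sUnion (fun M hM => (hc hM).1) hchain hne, ?_⟩,
    fun M hM => Set.subset_sUnion_of_mem hM⟩
  rintro ⟨M, hM, h1⟩
  exact (hc hM).2 h1

theorem isQuadraticModule_quadraticModuleSpan {m : ℕ} (g : Fin m → R) :
    IsQuadraticModule (quadraticModuleSpan g) where
  one_mem := ⟨Pi.single 0 1, fun j => by rcases eq_or_ne j 0 with rfl | hj <;> simp [*],
    by simp [Fin.succ_ne_zero]⟩
  add_mem := by
    rintro _ _ ⟨s, hs, rfl⟩ ⟨s', hs', rfl⟩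
    refine ⟨s + s', fun j => (hs j).add (hs' j), ?_⟩
    simp only [Pi.add_apply, add_mul, Finset.sum_add_distrib]
    ring
  sq_mul_mem f := by
    rintro _ ⟨s, hs, rfl⟩
    refine ⟨fun j => f ^ 2 * s j, fun j => (IsSquare.sq f).isSumSq.mul (hs j), ?_⟩
    simp only [mul_add, Finset.mul_sum, mul_assoc]

theorem mem_quadraticModuleSpan {m : ℕ} (g : Fin m → R) (j : Fin m) :
    g j ∈ quadraticModuleSpan g :=
  ⟨Pi.single j.succ 1, fun i => by rcases eq_or_ne i j.succ with rfl | hi <;> simp [*],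
    by simp [Pi.single_apply, Fin.succ_ne_zero, Fin.succ_inj]⟩

namespace IsQuadraticModule

variable {M : Set R} (hM : IsQuadraticModule M)
include hM

theorem zero_mem : (0 : R) ∈ M := by
  simpa using hM.sq_mul_mem 0 hM.one_mem

theorem isSumSq_mul_mem {s a : R} (hs : IsSumSq s) (ha : a ∈ M) : s * a ∈ M := by
  induction hs with
  | zero => simpa using hM.zero_mem
  | sq_add x _ ih => simpa [add_mul, sq] using hM.add_mem (hM.sq_mul_mem x ha) ih

theorem mem_of_isSumSq {s : R} (hs : IsSumSq s) : s ∈ M := by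
  simpa using hM.isSumSq_mul_mem hs hM.one_mem

theorem sum_mem {ι : Type*} (I : Finset ι) {f : ι → R} (h : ∀ i ∈ I, f i ∈ M) :
    ∑ i ∈ I, f i ∈ M := by
  classical
  induction I using Finset.induction_on with
  | empty => simpa using hM.zero_mem
  | insert i I hi ih =>
    rw [Finset.sum_insert hi]
    exact hM.add_mem (h i (by simp)) (ih fun j hj => h j (by simp [hj]))

theorem pow_mul_mem {a b : R} (hab : a * b ∈ M) (hb : b ∈ M) (j : ℕ) : a ^ j * b ∈ M := by
  obtain ⟨i, rfl | rfl⟩ := Nat.even_or_odd' j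
  · simpa [pow_mul'] using hM.sq_mul_mem (a ^ i) hb
  · rw [pow_succ, pow_mul', mul_assoc]
    exact hM.sq_mul_mem _ hab

theorem pow_mem {a : R} (ha : a ∈ M) (j : ℕ) : a ^ j ∈ M := by
  simpa using hM.pow_mul_mem (by simpa using ha) hM.one_mem j

theorem adjoin (a : R) : IsQuadraticModule (quadraticModuleAdjoin M a) where
  one_mem := subset_quadraticModuleAdjoin M a hM.one_mem
  add_mem := by
    rintro _ _ ⟨m₁, hm₁, s₁, hs₁, rfl⟩ ⟨m₂, hm₂, s₂, hs₂, rfl⟩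
    exact ⟨m₁ + m₂, hM.add_mem hm₁ hm₂, s₁ + s₂, hs₁.add hs₂, by ring⟩
  sq_mul_mem f := by
    rintro _ ⟨m, hm, s, hs, rfl⟩
    exact ⟨f ^ 2 * m, hM.sq_mul_mem f hm, f ^ 2 * s, (IsSquare.sq f).isSumSq.mul hs, by ring⟩

theorem mem_adjoin_self (a : R) : a ∈ quadraticModuleAdjoin M a :=
  ⟨0, hM.zero_mem, 1, .one, by ring⟩

end IsQuadraticModule

section RealAlgebra

variable [Algebra ℝ R] {M : Set R}

def IsBoundedBy (M : Set R) (f : R) (c : ℝ) : Prop :=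
  algebraMap ℝ R c - f ∈ M ∧ algebraMap ℝ R c + f ∈ M

def IsArchimedean (M : Set R) : Prop :=
  ∀ f : R, ∃ c : ℝ, algebraMap ℝ R c - f ∈ M

theorem IsArchimedean.mono {M' : Set R} (h : M ⊆ M') (harch : IsArchimedean M) :
    IsArchimedean M' :=
  fun f => (harch f).imp fun _ hc => h hc

theorem IsBoundedBy.neg {f : R} {c : ℝ} (hf : IsBoundedBy M f c) : IsBoundedBy M (-f) c :=
  ⟨by simpa using hf.2, by simpa [← sub_eq_add_neg] using hf.1⟩

namespace IsQuadraticModule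

variable (hM : IsQuadraticModule M)
include hM

theorem algebraMap_mul_mem {c : ℝ} (hc : 0 ≤ c) {a : R} (ha : a ∈ M) :
    algebraMap ℝ R c * a ∈ M := by
  have hsq : algebraMap ℝ R c = algebraMap ℝ R √c ^ 2 := by rw [← map_pow, Real.sq_sqrt hc]
  simpa [hsq] using hM.sq_mul_mem _ ha

theorem algebraMap_mem {c : ℝ} (hc : 0 ≤ c) : algebraMap ℝ R c ∈ M := by
  simpa using hM.algebraMap_mul_mem hc hM.one_mem

theorem sub_mem_of_le {f : R} {c d : ℝ} (hf : algebraMap ℝ R c - f ∈ M) (hcd : c ≤ d) :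
    algebraMap ℝ R d - f ∈ M := by
  have e : algebraMap ℝ R d - f = algebraMap ℝ R (d - c) + (algebraMap ℝ R c - f) := by
    rw [map_sub]; ring
  exact e ▸ hM.add_mem (hM.algebraMap_mem (sub_nonneg.2 hcd)) hf

theorem mul_mem_of_add_eq {a b : R} {c : ℝ} (ha : a ∈ M) (hb : b ∈ M)
    (hab : a + b = algebraMap ℝ R c) (hc : 0 < c) : a * b ∈ M := by
  have e : algebraMap ℝ R c⁻¹ * (b ^ 2 * a + a ^ 2 * b) = a * b := by
    rw [show b ^ 2 * a + a ^ 2 * b = (a + b) * (a * b) by ring, hab, ← mul_assoc, ← map_mul,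
      inv_mul_cancel₀ hc.ne', map_one, one_mul]
  exact e ▸ hM.algebraMap_mul_mem (inv_nonneg.2 hc.le)
    (hM.add_mem (hM.sq_mul_mem b ha) (hM.sq_mul_mem a hb))

theorem algebraMap_pow_sub_pow_mem {v : R} {θ : ℝ} (hθ : 0 < θ) (hv : v ∈ M)
    (hθv : algebraMap ℝ R θ - v ∈ M) (n : ℕ) : algebraMap ℝ R (θ ^ n) - v ^ n ∈ M := by
  induction n with
  | zero => simpa using hM.zero_mem
  | succ n ih =>
    have e : algebraMap ℝ R (θ ^ (n + 1)) - v ^ (n + 1) =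
        algebraMap ℝ R θ * (algebraMap ℝ R (θ ^ n) - v ^ n) + v ^ n * (algebraMap ℝ R θ - v) := by
      simp only [map_pow]; ring
    rw [e]
    exact hM.add_mem (hM.algebraMap_mul_mem hθ.le ih)
      (hM.pow_mul_mem (hM.mul_mem_of_add_eq hv hθv (by ring) hθ) hθv n)

theorem isBoundedBy_algebraMap (a : ℝ) : IsBoundedBy M (algebraMap ℝ R a) |a| :=
  ⟨by simpa [← map_sub] using hM.algebraMap_mem (sub_nonneg.2 (le_abs_self a)),
    by simpa [← map_add, add_comm] using
      hM.algebraMap_mem (neg_le_iff_add_nonneg.1 (neg_abs_le a))⟩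

theorem isBoundedBy_of_sub_sq_mem {f : R} {c : ℝ} (h : algebraMap ℝ R c - f ^ 2 ∈ M) :
    IsBoundedBy M f ((c + 1) / 2) := by
  have h2 : algebraMap ℝ R 2⁻¹ * 2 = 1 := by
    rw [← map_ofNat (algebraMap ℝ R) 2, ← map_mul, inv_mul_cancel₀ two_ne_zero, map_one]
  have hc : algebraMap ℝ R ((c + 1) / 2) = algebraMap ℝ R 2⁻¹ * (algebraMap ℝ R c + 1) := by
    rw [← map_one (algebraMap ℝ R), ← map_add, ← map_mul, inv_mul_eq_div]
  constructor
  · have e : algebraMap ℝ R ((c + 1) / 2) - f =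
        algebraMap ℝ R 2⁻¹ * ((f - 1) ^ 2 + (algebraMap ℝ R c - f ^ 2)) := by
      linear_combination hc + f * h2
    exact e ▸ hM.algebraMap_mul_mem (by norm_num)
      (hM.add_mem (hM.mem_of_isSumSq (IsSquare.sq _).isSumSq) h)
  · have e : algebraMap ℝ R ((c + 1) / 2) + f =
        algebraMap ℝ R 2⁻¹ * ((f + 1) ^ 2 + (algebraMap ℝ R c - f ^ 2)) := by
      linear_combination hc - f * h2
    exact e ▸ hM.algebraMap_mul_mem (by norm_num)
      (hM.add_mem (hM.mem_of_isSumSq (IsSquare.sq _).isSumSq) h)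

end IsQuadraticModule

/-- Maximality yields `-1 = m₁ + s₁ a = m₂ - s₂ a`; these force `-s₂ ∈ M`, hence `-s₂ a ∈ M`
and `-1 ∈ M`. -/
theorem IsQuadraticModule.mem_or_neg_mem_of_maximal
    (hmax : Maximal (fun M : Set R => IsQuadraticModule M ∧ (-1 : R) ∉ M) M) (a : R) :
    a ∈ M ∨ -a ∈ M := by
  obtain ⟨hM, hM1⟩ := hmax.prop
  have cert : ∀ b, b ∉ M → ∃ m ∈ M, ∃ s, IsSumSq s ∧ -1 = m + s * b := fun b hb => by
    by_contra h
    exact hb (hmax.2 ⟨hM.adjoin b, h⟩ (subset_quadraticModuleAdjoin M b) (hM.mem_adjoin_self b))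
  by_contra! h
  obtain ⟨m₁, hm₁, s₁, hs₁, e₁⟩ := cert a h.1
  obtain ⟨m₂, hm₂, s₂, hs₂, e₂⟩ := cert (-a) h.2
  have hs₂_neg : -s₂ ∈ M := by
    have e : -s₂ = s₁ + (s₂ * m₁ + s₁ * m₂) := by linear_combination s₂ * e₁ + s₁ * e₂
    exact e ▸ hM.add_mem (hM.mem_of_isSumSq hs₁)
      (hM.add_mem (hM.isSumSq_mul_mem hs₂ hm₁) (hM.isSumSq_mul_mem hs₁ hm₂))
  have h4 : algebraMap ℝ R 4⁻¹ * 4 = 1 := by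
    rw [← map_ofNat (algebraMap ℝ R) 4, ← map_mul, inv_mul_cancel₀ four_ne_zero, map_one]
  have e : -1 = m₂ + algebraMap ℝ R 4⁻¹ * ((a + 1) ^ 2 * -s₂ + (a - 1) ^ 2 * s₂) := by
    linear_combination e₂ + s₂ * a * h4
  exact hM1 (e ▸ hM.add_mem hm₂ (hM.algebraMap_mul_mem (by norm_num)
    (hM.add_mem (hM.sq_mul_mem _ hs₂_neg) (hM.sq_mul_mem _ (hM.mem_of_isSumSq hs₂)))))

namespace IsBoundedBy

variable (hM : IsQuadraticModule M) {f g : R} {c d : ℝ}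
include hM

theorem mono (hf : IsBoundedBy M f c) (hcd : c ≤ d) : IsBoundedBy M f d :=
  ⟨hM.sub_mem_of_le hf.1 hcd, by simpa using hM.sub_mem_of_le (f := -f) (by simpa using hf.2) hcd⟩

theorem add (hf : IsBoundedBy M f c) (hg : IsBoundedBy M g d) : IsBoundedBy M (f + g) (c + d) :=
  ⟨by convert hM.add_mem hf.1 hg.1 using 1; rw [map_add]; ring,
    by convert hM.add_mem hf.2 hg.2 using 1; rw [map_add]; ring⟩

theorem algebraMap_mul (hf : IsBoundedBy M f c) (a : ℝ) :
    IsBoundedBy M (algebraMap ℝ R a * f) (|a| * c) := by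
  have key : ∀ b, 0 ≤ b → ∀ h, IsBoundedBy M h c →
      IsBoundedBy M (algebraMap ℝ R b * h) (b * c) :=
    fun b hb h hh => ⟨by simpa [mul_sub] using hM.algebraMap_mul_mem hb hh.1,
      by simpa [mul_add] using hM.algebraMap_mul_mem hb hh.2⟩
  rcases le_or_gt 0 a with ha | ha
  · simpa [abs_of_nonneg ha] using key a ha f hf
  · simpa [abs_of_neg ha] using key (-a) (by linarith) (-f) hf.neg

theorem sq (hf : IsBoundedBy M f c) (hc : 0 < c) : IsBoundedBy M (f ^ 2) (c ^ 2) := by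
  refine ⟨?_, hM.add_mem (hM.algebraMap_mem (sq_nonneg c)) (hM.mem_of_isSumSq (IsSquare.sq f).isSumSq)⟩
  have e : algebraMap ℝ R (c ^ 2) - f ^ 2 = (algebraMap ℝ R c - f) * (algebraMap ℝ R c + f) := by
    rw [map_pow]; ring
  exact e ▸ hM.mul_mem_of_add_eq hf.1 hf.2 (by rw [map_add]; ring) (by positivity)

theorem mul (hf : IsBoundedBy M f c) (hg : IsBoundedBy M g d) (hc : 0 < c) (hd : 0 < d) :
    IsBoundedBy M (f * g) ((c + d) ^ 2 / 2) := by
  have h4 : algebraMap ℝ R 4⁻¹ * 4 = 1 := by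
    rw [← map_ofNat (algebraMap ℝ R) 4, ← map_mul, inv_mul_cancel₀ four_ne_zero, map_one]
  have h := (((hf.add hM hg).sq hM (by positivity)).algebraMap_mul hM 4⁻¹).add hM
    (((hf.add hM hg.neg).sq hM (by positivity)).algebraMap_mul hM (-4⁻¹))
  have e : f * g =
      algebraMap ℝ R 4⁻¹ * (f + g) ^ 2 + algebraMap ℝ R (-4⁻¹) * (f + -g) ^ 2 := by
    rw [map_neg]; linear_combination (-(f * g)) * h4
  rw [e]
  convert h using 1
  rw [abs_neg, abs_of_pos (by norm_num : (0 : ℝ) < 4⁻¹)]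
  ring

end IsBoundedBy

def IsQuadraticModule.boundedSubalgebra (hM : IsQuadraticModule M) : Subalgebra ℝ R where
  carrier := {f | ∃ c, IsBoundedBy M f c}
  mul_mem' := by
    rintro f g ⟨c, hf⟩ ⟨d, hg⟩
    exact ⟨_, (hf.mono hM (le_max_left c 1)).mul hM (hg.mono hM (le_max_left d 1))
      (by positivity) (by positivity)⟩
  add_mem' := by
    rintro f g ⟨c, hf⟩ ⟨d, hg⟩
    exact ⟨_, hf.add hM hg⟩
  algebraMap_mem' a := ⟨_, hM.isBoundedBy_algebraMap a⟩

end RealAlgebra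

namespace IsQuadraticModule

variable [Algebra ℝ R] {M : Set R}

/-- The cut of `M` at `f`; for `M` maximal among proper quadratic modules and Archimedean it is
a character of `R`, see `stateAlgHom`. -/
noncomputable def state (M : Set R) (f : R) : ℝ :=
  sInf {r : ℝ | algebraMap ℝ R r - f ∈ M}

section State

variable (hM : IsQuadraticModule M) (hM1 : (-1 : R) ∉ M)
include hM hM1

theorem nonneg_of_algebraMap_mem {c : ℝ} (hc : algebraMap ℝ R c ∈ M) : 0 ≤ c := by
  by_contra! h
  have e : algebraMap ℝ R (-c⁻¹) * algebraMap ℝ R c = -1 := by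
    rw [← map_mul, neg_mul, inv_mul_cancel₀ h.ne, map_neg, map_one]
  exact hM1 (e ▸ hM.algebraMap_mul_mem (neg_nonneg.2 (inv_nonpos.2 h.le)) hc)

theorem abs_le_of_isBoundedBy_algebraMap {a c : ℝ} (h : IsBoundedBy M (algebraMap ℝ R a) c) :
    |a| ≤ c := by
  have h₁ := hM.nonneg_of_algebraMap_mem hM1 (c := c - a) (by simpa using h.1)
  have h₂ := hM.nonneg_of_algebraMap_mem hM1 (c := c + a) (by simpa using h.2)
  exact abs_le.2 ⟨by linarith, by linarith⟩

variable (harch : IsArchimedean M) (htot : ∀ a, a ∈ M ∨ -a ∈ M)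
include harch htot

theorem isBoundedBy_sub_state (f : R) {ε : ℝ} (hε : 0 < ε) :
    IsBoundedBy M (f - algebraMap ℝ R (state M f)) ε := by
  obtain ⟨k, hk⟩ := harch f
  obtain ⟨k', hk'⟩ := harch (-f)
  have hbdd : BddBelow {r : ℝ | algebraMap ℝ R r - f ∈ M} := ⟨-k', fun r hr => by
    have := hM.nonneg_of_algebraMap_mem hM1 (c := r + k')
      (by convert hM.add_mem hr hk' using 1; rw [map_add]; ring)
    linarith⟩
  constructor
  · obtain ⟨r, hr, hlt⟩ := exists_lt_of_csInf_lt ⟨k, hk⟩ (lt_add_of_pos_right (state M f) hε)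
    convert hM.sub_mem_of_le hr hlt.le using 1
    rw [map_add]; ring
  · have hnot : algebraMap ℝ R (state M f - ε) - f ∉ M := fun h =>
      (csInf_le hbdd h).not_gt (sub_lt_self _ hε)
    convert (htot _).resolve_left hnot using 1
    rw [map_sub]; ring

theorem state_eq_of_forall_isBoundedBy {f : R} {c : ℝ}
    (h : ∀ ε > 0, IsBoundedBy M (f - algebraMap ℝ R c) ε) : state M f = c := by
  refine eq_of_forall_dist_le fun ε hε => ?_
  have hsum := (h (ε / 2) (by positivity)).add hM
    (hM.isBoundedBy_sub_state hM1 harch htot f (ε := ε / 2) (by positivity)).neg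
  rw [Real.dist_eq, ← add_halves ε]
  refine hM.abs_le_of_isBoundedBy_algebraMap hM1 ?_
  convert hsum using 1
  rw [map_sub]; ring

theorem state_algebraMap (c : ℝ) : state M (algebraMap ℝ R c) = c :=
  hM.state_eq_of_forall_isBoundedBy hM1 harch htot fun ε hε => by
    simpa using (hM.isBoundedBy_algebraMap 0).mono hM (by simpa using hε.le)

theorem state_add (f g : R) : state M (f + g) = state M f + state M g :=
  hM.state_eq_of_forall_isBoundedBy hM1 harch htot fun ε hε => by
    have h := (hM.isBoundedBy_sub_state hM1 harch htot f (half_pos hε)).add hM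
      (hM.isBoundedBy_sub_state hM1 harch htot g (half_pos hε))
    rw [add_halves] at h
    convert h using 1
    rw [map_add]; ring

theorem state_mul (f g : R) : state M (f * g) = state M f * state M g := by
  refine hM.state_eq_of_forall_isBoundedBy hM1 harch htot fun ε hε => ?_
  set a := state M f
  set b := state M g
  set δ := min 1 (ε / (|a| + |b| + 2))
  have hδ : 0 < δ := lt_min one_pos (by positivity)
  have hu := hM.isBoundedBy_sub_state hM1 harch htot f hδ
  have hw := hM.isBoundedBy_sub_state hM1 harch htot g hδ
  have h := ((hw.algebraMap_mul hM a).add hM (hu.algebraMap_mul hM b)).add hM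
    (hu.mul hM hw hδ hδ)
  have e : f * g - algebraMap ℝ R (a * b) = algebraMap ℝ R a * (g - algebraMap ℝ R b) +
      algebraMap ℝ R b * (f - algebraMap ℝ R a) +
      (f - algebraMap ℝ R a) * (g - algebraMap ℝ R b) := by
    rw [map_mul]; ring
  rw [e]
  refine h.mono hM ?_
  have hδ₁ : δ ≤ 1 := min_le_left _ _
  have hδε : (|a| + |b| + 2) * δ ≤ ε := (le_div_iff₀' (by positivity)).1 (min_le_right _ _)
  nlinarith [abs_nonneg a, abs_nonneg b]

theorem state_nonneg {f : R} (hf : f ∈ M) : 0 ≤ state M f := by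
  refine le_of_forall_pos_le_add fun ε hε => ?_
  have h := hM.add_mem (hM.isBoundedBy_sub_state hM1 harch htot f hε).1 hf
  have := hM.nonneg_of_algebraMap_mem hM1 (c := ε + state M f)
    (by convert h using 1; rw [map_add]; ring)
  linarith

noncomputable def stateAlgHom : R →ₐ[ℝ] ℝ where
  toFun := state M
  map_one' := by simpa using hM.state_algebraMap hM1 harch htot 1
  map_mul' := hM.state_mul hM1 harch htot
  map_zero' := by simpa using hM.state_algebraMap hM1 harch htot 0
  map_add' := hM.state_add hM1 harch htot
  commutes' := hM.state_algebraMap hM1 harch htot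

end State

variable (hM : IsQuadraticModule M) (harch : IsArchimedean M)
include hM harch

theorem exists_algHom_nonneg (hM1 : (-1 : R) ∉ M) : ∃ φ : R →ₐ[ℝ] ℝ, ∀ f ∈ M, 0 ≤ φ f := by
  obtain ⟨M', hMM', hmax⟩ := hM.exists_maximal hM1
  obtain ⟨hM', hM'1⟩ := hmax.prop
  have htot := mem_or_neg_mem_of_maximal hmax
  exact ⟨hM'.stateAlgHom hM'1 (harch.mono hMM') htot,
    fun f hf => hM'.state_nonneg hM'1 (harch.mono hMM') htot (hMM' hf)⟩

/-- With `v = (k' - t) / (k' + 1)` and `θ = k' / (k' + 1)` we have `0 ≤ v ≤ θ < 1` and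
`(1 + t) ∑_{j < 2r} vʲ / (k' + 1) = 1 - v²ʳ`, so `q (1 - v²ʳ) = s q² ∑_{j < 2r} vʲ / (k' + 1) ∈ M`,
while `(k + q) v²ʳ ∈ M` and `v²ʳ ≤ θ²ʳ` give `q v²ʳ ≥ -k θ²ʳ`. -/
theorem add_algebraMap_mem_of_isSumSq_mul_eq {s q t : R} (hs : IsSumSq s) (ht : t ∈ M)
    (h : s * q = 1 + t) {ε : ℝ} (hε : 0 < ε) : q + algebraMap ℝ R ε ∈ M := by
  obtain ⟨k₀, hk₀⟩ := harch (-q)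
  obtain ⟨k₁, hk₁⟩ := harch t
  set k := max k₀ 0
  set k' := max k₁ 1
  have hk : algebraMap ℝ R k + q ∈ M := by simpa using hM.sub_mem_of_le hk₀ (le_max_left k₀ 0)
  have hk' : algebraMap ℝ R k' - t ∈ M := hM.sub_mem_of_le hk₁ (le_max_left k₁ 1)
  set l := (k' + 1)⁻¹
  set θ := k' * l
  have hl : 0 < l := by positivity
  have hθ : 0 < θ := by positivity
  have hθ1 : θ < 1 := by rw [mul_inv_lt_iff₀ (by positivity)]; linarith
  obtain ⟨v, hv, hθv, h1v⟩ : ∃ v ∈ M, algebraMap ℝ R θ - v ∈ M ∧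
      1 - v = algebraMap ℝ R l * (1 + t) := by
    have hl1 : algebraMap ℝ R l * (algebraMap ℝ R k' + 1) = 1 := by
      rw [← map_one (algebraMap ℝ R), ← map_add, ← map_mul, inv_mul_cancel₀ (by positivity)]
    refine ⟨_, hM.algebraMap_mul_mem hl.le hk', ?_, by linear_combination -hl1⟩
    convert hM.algebraMap_mul_mem hl.le ht using 1
    rw [map_mul]; ring
  obtain ⟨r, hr⟩ := exists_pow_lt_of_lt_one (div_pos hε (by positivity : 0 < k + 1))
    (pow_lt_one₀ hθ.le hθ1 two_ne_zero)
  rw [← pow_mul, lt_div_iff₀ (by positivity)] at hr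
  set S := ∑ j ∈ Finset.range (2 * r), v ^ j
  have e : q + algebraMap ℝ R ε = s * q ^ 2 * (algebraMap ℝ R l * S) +
      (v ^ r) ^ 2 * (algebraMap ℝ R k + q) +
      algebraMap ℝ R k * (algebraMap ℝ R (θ ^ (2 * r)) - v ^ (2 * r)) +
      algebraMap ℝ R (ε - k * θ ^ (2 * r)) := by
    rw [map_sub, map_mul]
    linear_combination (-q * algebraMap ℝ R l * S) * h + (q * S) * h1v -
      q * mul_neg_geom_sum v (2 * r)
  rw [e]
  refine hM.add_mem (hM.add_mem (hM.add_mem ?_ (hM.sq_mul_mem _ hk)) ?_)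
    (hM.algebraMap_mem (by nlinarith [pow_nonneg hθ.le (2 * r), le_max_right k₀ 0]))
  · exact hM.isSumSq_mul_mem (hs.mul (IsSquare.sq q).isSumSq)
      (hM.algebraMap_mul_mem hl.le (hM.sum_mem _ fun j _ => hM.pow_mem hv j))
  · exact hM.algebraMap_mul_mem (le_max_right _ _) (hM.algebraMap_pow_sub_pow_mem hθ hv hθv _)

end IsQuadraticModule

section MvPolynomial

variable {σ : Type*} {M : Set (MvPolynomial σ ℝ)}

theorem IsQuadraticModule.isArchimedean_of_forall_isBoundedBy_X (hM : IsQuadraticModule M)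
    (h : ∀ i, ∃ c, IsBoundedBy M (X i) c) : IsArchimedean M := by
  intro f
  have hle : Algebra.adjoin ℝ (Set.range X) ≤ hM.boundedSubalgebra :=
    Algebra.adjoin_le (by rintro _ ⟨i, rfl⟩; exact h i)
  rw [adjoin_range_X, top_le_iff] at hle
  obtain ⟨c, hc⟩ : f ∈ hM.boundedSubalgebra := hle ▸ Algebra.mem_top
  exact ⟨c, hc.1⟩

theorem IsQuadraticModule.isArchimedean_of_sub_sum_sq_mem [Fintype σ]
    (hM : IsQuadraticModule M) {c : ℝ} (h : C c - ∑ i, X i ^ 2 ∈ M) : IsArchimedean M := by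
  classical
  refine hM.isArchimedean_of_forall_isBoundedBy_X fun i =>
    ⟨_, hM.isBoundedBy_of_sub_sq_mem (c := c) ?_⟩
  have e : algebraMap ℝ _ c - X i ^ 2 =
      (C c - ∑ i, X i ^ 2) + ∑ j ∈ Finset.univ.erase i, X j ^ 2 := by
    rw [← Finset.add_sum_erase _ _ (Finset.mem_univ i), algebraMap_eq]; ring
  exact e ▸ hM.add_mem h (hM.mem_of_isSumSq (IsSumSq.sum_sq _ _))

theorem IsQuadraticModule.exists_eval_nonneg (hM : IsQuadraticModule M)
    (harch : IsArchimedean M) (hM1 : (-1 : MvPolynomial σ ℝ) ∉ M) :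
    ∃ x : σ → ℝ, ∀ f ∈ M, 0 ≤ eval x f := by
  obtain ⟨φ, hφ⟩ := hM.exists_algHom_nonneg harch hM1
  refine ⟨φ ∘ X, fun f hf => ?_⟩
  rw [← coe_aeval_eq_eval, ← aeval_unique φ]
  exact hφ f hf

theorem IsArchimedean.isCompact_setOf_forall_eval_nonneg (harch : IsArchimedean M) :
    IsCompact {x : σ → ℝ | ∀ f ∈ M, 0 ≤ eval x f} := by
  choose a ha using fun i => harch (X i)
  choose b hb using fun i => harch (-X i)
  refine (isCompact_univ_pi fun i => isCompact_Icc (a := -b i) (b := a i)).of_isClosed_subset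
    ?_ fun x hx i _ => ?_
  · simp only [Set.ofPred_forall]
    exact isClosed_iInter fun f => isClosed_iInter fun _ =>
      isClosed_le continuous_const (continuous_eval f)
  · have h₁ := hx _ (ha i)
    have h₂ := hx _ (hb i)
    simp only [algebraMap_eq, map_sub, map_neg, eval_C, eval_X] at h₁ h₂
    constructor <;> linarith

theorem IsQuadraticModule.mem_of_forall_eval_pos (hM : IsQuadraticModule M)
    (harch : IsArchimedean M) {p : MvPolynomial σ ℝ}
    (hp : ∀ x : σ → ℝ, (∀ f ∈ M, 0 ≤ eval x f) → 0 < eval x p) : p ∈ M := by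
  obtain ⟨ε, hε, hεp⟩ := harch.isCompact_setOf_forall_eval_nonneg.exists_forall_le'
    (continuous_eval p).continuousOn hp
  have hcert : (-1 : MvPolynomial σ ℝ) ∈ quadraticModuleAdjoin M (-(p - C (ε / 2))) := by
    by_contra h
    obtain ⟨x, hx⟩ := (hM.adjoin _).exists_eval_nonneg
      (harch.mono (subset_quadraticModuleAdjoin _ _)) h
    have hpx := hεp x fun f hf => hx f (subset_quadraticModuleAdjoin _ _ hf)
    have := hx _ (hM.mem_adjoin_self _)
    simp only [map_neg, map_sub, eval_C] at this
    linarith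
  obtain ⟨t, ht, s, hs, h⟩ := hcert
  have hmem := hM.add_algebraMap_mem_of_isSumSq_mul_eq harch hs ht (q := p - C (ε / 2))
    (by linear_combination h) (half_pos hε)
  rwa [algebraMap_eq, sub_add_cancel] at hmem

end MvPolynomial

/-- Putinar's Positivstellensatz: if `g₁ = N − Σ wᵢ²` is among the generators
of the basic semi-algebraic set `𝐊`, then every polynomial strictly positive
on `𝐊` lies in the quadratic module generated by `g₀ = 1, g₁, …, g_m`. -/
theorem putinar_positivstellensatz
    (n m : ℕ) (hm : 0 < m) (N : ℕ)
    (g : Fin m → MvPolynomial (Fin n) ℝ)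
    (hg1 : g ⟨0, hm⟩
      = MvPolynomial.C (N : ℝ) - ∑ i : Fin n, MvPolynomial.X i ^ 2)
    (p : MvPolynomial (Fin n) ℝ)
    (hp : ∀ w : Fin n → ℝ,
      (∀ j : Fin m, 0 ≤ MvPolynomial.eval w (g j)) → 0 < MvPolynomial.eval w p) :
    ∃ s : Fin (m + 1) → MvPolynomial (Fin n) ℝ,
      (∀ j, IsSumSq (s j)) ∧
      p = s 0 + ∑ j : Fin m, s j.succ * g j := by
  have hT := isQuadraticModule_quadraticModuleSpan g
  have hT_arch := hT.isArchimedean_of_sub_sum_sq_mem (hg1 ▸ mem_quadraticModuleSpan g ⟨0, hm⟩)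
  exact hT.mem_of_forall_eval_pos hT_arch fun w hw =>
    hp w fun j => hw _ (mem_quadraticModuleSpan g j)
end

section
/- Let N > 0, d ≥ 1, and let L : ℝ[w₁,…,w_n] → ℝ be a linear functional such that L(q²) ≥ 0 for every polynomial q of degree at most d and L((N − Σ_{i=1}^n w_i²)·q²) ≥ 0 for every polynomial q of degree at most d−1. Then for every i ∈ {1,…,n} and every integer k with 1 ≤ k ≤ d: L(w_i^{2k}) ≤ N^k · L(1). -/
/-!
Testing the localizing condition on `q = wᵢᵏ` gives
`Σⱼ L((wⱼ wᵢᵏ)²) ≤ N · L(wᵢ^{2k})`, and every summand is nonnegative by the moment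
condition, so the `j = i` summand alone yields `L(wᵢ^{2k+2}) ≤ N · L(wᵢ^{2k})`.
Iterating from `L(wᵢ⁰) = L(1)` gives the bound.
-/

open MvPolynomial

section

variable {σ R : Type*} [Fintype σ] [CommRing R]

theorem sub_sum_X_sq_mul_sq (N : R) (q : MvPolynomial σ R) :
    (C N - ∑ j, X j ^ 2) * q ^ 2 = N • q ^ 2 - ∑ j, (X j * q) ^ 2 := by
  rw [smul_eq_C_mul, sub_mul, Finset.sum_mul]
  simp only [mul_pow]

theorem map_X_pow_two_mul_succ_le [PartialOrder R] [IsOrderedRing R]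
    (L : MvPolynomial σ R →ₗ[R] R) (N : R) (i : σ) (k : ℕ)
    (hmom : ∀ j, 0 ≤ L ((X j * X i ^ k) ^ 2))
    (hloc : 0 ≤ L ((C N - ∑ j, X j ^ 2) * (X i ^ k) ^ 2)) :
    L (X i ^ (2 * (k + 1))) ≤ N * L (X i ^ (2 * k)) := by
  rw [sub_sum_X_sq_mul_sq, map_sub, map_smul, map_sum, smul_eq_mul, sub_nonneg] at hloc
  have hdiag : L ((X i * X i ^ k) ^ 2) ≤ ∑ j, L ((X j * X i ^ k) ^ 2) :=
    Finset.single_le_sum (fun j _ => hmom j) (Finset.mem_univ i)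
  rw [← pow_succ', ← pow_mul'] at hdiag
  rw [← pow_mul'] at hloc
  exact hdiag.trans hloc

end

theorem moment_power_bound_general
    (n d : ℕ) (N : ℝ) (hN : 0 < N)
    (L : MvPolynomial (Fin n) ℝ →ₗ[ℝ] ℝ)
    (hmom : ∀ q : MvPolynomial (Fin n) ℝ, q.totalDegree ≤ d → 0 ≤ L (q ^ 2))
    (hloc : ∀ q : MvPolynomial (Fin n) ℝ, q.totalDegree ≤ d - 1 →
      0 ≤ L ((MvPolynomial.C N - ∑ i : Fin n, MvPolynomial.X i ^ 2) * q ^ 2))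
    (i : Fin n) (k : ℕ) (hkd : k ≤ d) :
    L (MvPolynomial.X i ^ (2 * k)) ≤ N ^ k * L 1 := by
  simpa using le_geom (u := fun m => L (X i ^ (2 * m))) hN.le k fun m hm => by
    refine map_X_pow_two_mul_succ_le L N i m (fun j => hmom _ ?_) (hloc _ ?_)
    · grw [totalDegree_mul, totalDegree_X, totalDegree_X_pow]
      omega
    · rw [totalDegree_X_pow]
      omega

/-- If the degree-`d` moment matrix and the degree-`(d−1)` localizing matrix
with respect to `g₁(w) = N − Σᵢ wᵢ²` of a linear functional `L` are positive
semidefinite, then `L(wᵢ^{2k}) ≤ Nᵏ · L(1)` for all `1 ≤ k ≤ d`. -/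
theorem moment_power_bound
    (n d : ℕ) (hd : 1 ≤ d) (N : ℝ) (hN : 0 < N)
    (L : MvPolynomial (Fin n) ℝ →ₗ[ℝ] ℝ)
    (hmom : ∀ q : MvPolynomial (Fin n) ℝ, q.totalDegree ≤ d → 0 ≤ L (q ^ 2))
    (hloc : ∀ q : MvPolynomial (Fin n) ℝ, q.totalDegree ≤ d - 1 →
      0 ≤ L ((MvPolynomial.C N - ∑ i : Fin n, MvPolynomial.X i ^ 2) * q ^ 2))
    (i : Fin n) (k : ℕ) (hk1 : 1 ≤ k) (hkd : k ≤ d) :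
    L (MvPolynomial.X i ^ (2 * k)) ≤ N ^ k * L 1 :=
  moment_power_bound_general n d N hN L hmom hloc i k hkd
end

section
/- Let d ≥ 1 and let L : ℝ[w₁,…,w_n] → ℝ be a linear functional such that L(q²) ≥ 0 for every polynomial q of degree at most d (i.e. the moment matrix M_d of L is positive semidefinite). Then for every multi-index α ∈ ℕⁿ with |α| ≤ 2d: |L(w^α)| ≤ max( L(1), max_{i=1,…,n} L(w_i^{2d}) ). -/
/-!
Positivity of `L` on squares of degree `≤ d` gives the Cauchy–Schwarz inequality
`L(w^(β+γ))² ≤ L(w^(2β)) L(w^(2γ))` for `|β|, |γ| ≤ d`. Since every `α` with `|α| ≤ 2d` splits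
as `β + γ` with `|β|, |γ| ≤ d`, it suffices to bound the even moments `s β = L(w^(2β))`.
Take `β` maximising `s`, and among the maximisers one maximising `∑ βₖ²`. Unless `β = 0` or
`β = d eᵢ`, one can write `2β = p + m` with `|p|, |m| ≤ d` and `∑ pₖ² > ∑ βₖ²`
(move one unit of `β` from a smaller coordinate to a larger one, or raise a lone coordinate
when `|β| < d`); then `s β² ≤ s p · s m ≤ s p · s β` forces `s β ≤ 0` by the choice of `β`.
-/

open MvPolynomial Finsupp

theorem sq_map_mul_le_of_nonneg_map_sq {𝕜 A : Type*} [Field 𝕜] [LinearOrder 𝕜]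
    [IsStrictOrderedRing 𝕜] [CommRing A] [Algebra 𝕜 A] (L : A →ₗ[𝕜] 𝕜) (V : Submodule 𝕜 A)
    (hL : ∀ q ∈ V, 0 ≤ L (q ^ 2))
    {p q : A} (hp : p ∈ V) (hq : q ∈ V) :
    L (p * q) ^ 2 ≤ L (p ^ 2) * L (q ^ 2) := by
  have hquad : ∀ t : 𝕜, 0 ≤ L (p ^ 2) * (t * t) + 2 * L (p * q) * t + L (q ^ 2) := by
    intro t
    have hexp : (t • p + q) ^ 2 = (t * t) • p ^ 2 + (2 * t) • (p * q) + q ^ 2 := by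
      simp only [Algebra.smul_def, map_mul, map_ofNat]
      ring
    have h := hL _ (V.add_mem (V.smul_mem t hp) hq)
    rw [hexp, map_add, map_add, map_smul, map_smul, smul_eq_mul, smul_eq_mul] at h
    linarith
  have h := discrim_le_zero hquad
  rw [discrim] at h
  linarith

section Combinatorics

variable {σ : Type*} [Fintype σ]

def sumSq (β : σ →₀ ℕ) : ℕ := ∑ k, β k ^ 2

theorem sumSq_single (i : σ) (k : ℕ) : sumSq (single i k) = k ^ 2 := by
  classical
  simp [sumSq, single_apply, ite_pow]

theorem sumSq_add_single (δ : σ →₀ ℕ) (a : σ) (c : ℕ) :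
    sumSq (δ + single a c) = sumSq δ + 2 * c * δ a + c ^ 2 := by
  classical
  simp only [sumSq, Finsupp.coe_add, Pi.add_apply, add_sq, Finset.sum_add_distrib, single_apply,
    mul_ite, mul_zero, ite_pow, ne_eq, two_ne_zero, not_false_eq_true, zero_pow,
    Finset.sum_ite_eq, Finset.mem_univ, if_true]
  ring

theorem sumSq_add_single_add_single_lt {ε : σ →₀ ℕ} {a b : σ} (hab : a ≠ b) (h : ε b ≤ ε a) :
    sumSq (ε + single a 1 + single b 1) < sumSq (ε + single a 2) := by
  simp only [sumSq_add_single, Finsupp.coe_add, Pi.add_apply, single_eq_of_ne' hab]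
  omega

theorem exists_add_eq_add_self_sumSq_lt {d : ℕ} {β : σ →₀ ℕ} (hβ : degree β ≤ d) (h0 : β ≠ 0)
    (hsingle : ∀ i, β ≠ single i d) :
    ∃ p m, p + m = β + β ∧ degree p ≤ d ∧ degree m ≤ d ∧ sumSq β < sumSq p := by
  classical
  by_cases htwo : ∃ a b, a ≠ b ∧ β a ≠ 0 ∧ β b ≠ 0
  · obtain ⟨a, b, hab, ha, hb⟩ := htwo
    wlog hba : β b ≤ β a generalizing a b
    · exact this b a hab.symm hb ha (le_of_not_ge hba)
    obtain ⟨ε, rfl⟩ : ∃ ε, β = ε + single a 1 + single b 1 := by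
      obtain ⟨δ, rfl⟩ := le_iff_exists_add'.mp (single_le_iff.mpr (Nat.one_le_iff_ne_zero.mpr hb))
      have ha' : single a 1 ≤ δ := single_le_iff.mpr (by simp_all [Nat.one_le_iff_ne_zero])
      obtain ⟨ε, rfl⟩ := le_iff_exists_add'.mp ha'
      exact ⟨ε, rfl⟩
    simp only [map_add, degree_single] at hβ
    refine ⟨ε + single a 2, ε + single b 2, ?_, ?_, ?_, ?_⟩
    · ext k
      simp only [Finsupp.coe_add, Pi.add_apply, single_apply]
      split_ifs <;> omega
    · simp only [map_add, degree_single]; omega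
    · simp only [map_add, degree_single]; omega
    · exact sumSq_add_single_add_single_lt hab (by simpa [Ne.symm hab] using hba)
  · push Not at htwo
    obtain ⟨i, hi⟩ := Finsupp.ne_iff.mp h0
    obtain ⟨k, rfl⟩ : ∃ k, β = single i k := ⟨β i, by
      ext j
      by_cases hj : i = j
      · simp [hj]
      · simp [hj, htwo i j hj hi]⟩
    simp only [degree_single] at hβ
    have hk : k ≠ 0 := by simpa using hi
    have hkd : k < d := lt_of_le_of_ne hβ fun h => hsingle i (h ▸ rfl)
    refine ⟨single i (k + 1), single i (k - 1), ?_, ?_, ?_, ?_⟩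
    · rw [← single_add, ← single_add]
      congr 1
      omega
    · simp only [degree_single]; omega
    · simp only [degree_single]; omega
    · simp only [sumSq_single]
      exact Nat.pow_lt_pow_left (Nat.lt_succ_self k) two_ne_zero

end Combinatorics

theorem monomial_one_pow_two {σ R : Type*} [CommSemiring R] (β : σ →₀ ℕ) :
    (monomial β (1 : R)) ^ 2 = monomial (β + β) 1 := by
  rw [pow_two, monomial_mul, one_mul]

section Moments

variable {σ : Type*} (L : MvPolynomial σ ℝ →ₗ[ℝ] ℝ) {d : ℕ}
  (hL : ∀ q : MvPolynomial σ ℝ, q.totalDegree ≤ d → 0 ≤ L (q ^ 2))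
include hL

theorem map_monomial_add_self_nonneg {β : σ →₀ ℕ} (hβ : degree β ≤ d) :
    0 ≤ L (monomial (β + β) 1) := by
  rw [← monomial_one_pow_two]
  exact hL _ ((totalDegree_monomial _ one_ne_zero).trans_le hβ)

theorem sq_map_monomial_add_le {p m : σ →₀ ℕ} (hp : degree p ≤ d) (hm : degree m ≤ d) :
    L (monomial (p + m) 1) ^ 2 ≤ L (monomial (p + p) 1) * L (monomial (m + m) 1) := by
  have hmem : ∀ β : σ →₀ ℕ, degree β ≤ d → monomial β (1 : ℝ) ∈ restrictTotalDegree σ ℝ d :=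
    fun β hβ => (mem_restrictTotalDegree _ _ _).mpr
      ((totalDegree_monomial _ one_ne_zero).trans_le hβ)
  have h := sq_map_mul_le_of_nonneg_map_sq L _
    (fun q hq => hL q ((mem_restrictTotalDegree _ _ _).mp hq)) (hmem p hp) (hmem m hm)
  rwa [monomial_mul, one_mul, monomial_one_pow_two, monomial_one_pow_two] at h

variable [Fintype σ] {τ : ℝ} (h1 : L 1 ≤ τ) (hX : ∀ i, L (X i ^ (2 * d)) ≤ τ)
include h1 hX

theorem map_monomial_add_self_le {γ : σ →₀ ℕ} (hγ : degree γ ≤ d) :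
    L (monomial (γ + γ) 1) ≤ τ := by
  set s : (σ →₀ ℕ) → ℝ := fun β => L (monomial (β + β) 1)
  obtain ⟨β, hβ, hmax⟩ := Set.exists_max_image {β : σ →₀ ℕ | degree β ≤ d}
    (fun β => toLex (s β, sumSq β)) (finite_of_degree_le d) ⟨0, by simp⟩
  have hsβ : ∀ m, degree m ≤ d → s m ≤ s β :=
    fun m hm => (Prod.Lex.toLex_le_toLex'.mp (hmax m hm)).1
  have hτ : 0 ≤ τ := (map_monomial_add_self_nonneg L hL (β := 0) (by simp)).trans
    (by simpa using h1)
  refine (hsβ γ hγ).trans ?_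
  rcases eq_or_ne β 0 with rfl | h0
  · simpa [s] using h1
  by_cases hsingle : ∃ i, β = single i d
  · obtain ⟨i, rfl⟩ := hsingle
    simpa [s, X_pow_eq_monomial, single_add, two_mul] using hX i
  push Not at hsingle
  obtain ⟨p, m, hpm, hp, hm, hlt⟩ := exists_add_eq_add_self_sumSq_lt hβ h0 hsingle
  refine le_trans ?_ hτ
  by_contra! hpos
  have hcs : s β ^ 2 ≤ s p * s m := by
    simpa [s, hpm] using sq_map_monomial_add_le L hL hp hm
  have hsp : s β ≤ s p := by
    nlinarith [hsβ m hm, map_monomial_add_self_nonneg L hL hp]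
  have hlex := Prod.Lex.toLex_le_toLex'.mp (hmax p hp)
  exact absurd (hlex.2 (le_antisymm hlex.1 hsp)) (not_le.mpr hlt)

theorem abs_map_monomial_le {α : σ →₀ ℕ} (hα : degree α ≤ 2 * d) :
    |L (monomial α 1)| ≤ τ := by
  obtain ⟨β, hβα, hβ⟩ := exists_le_degree_eq α (min (degree α) d) (min_le_left _ _)
  obtain ⟨γ, rfl⟩ := le_iff_exists_add.mp hβα
  have hβd : degree β ≤ d := hβ ▸ min_le_right _ _
  have hγd : degree γ ≤ d := by rw [map_add] at hα hβ; omega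
  have hβτ := map_monomial_add_self_le L hL h1 hX hβd
  have hγτ := map_monomial_add_self_le L hL h1 hX hγd
  have hβ0 := map_monomial_add_self_nonneg L hL hβd
  have hγ0 := map_monomial_add_self_nonneg L hL hγd
  refine abs_le_of_sq_le_sq ((sq_map_monomial_add_le L hL hβd hγd).trans ?_) (hβ0.trans hβτ)
  rw [sq]
  exact mul_le_mul hβτ hγτ hγ0 (hβ0.trans hβτ)

end Moments

theorem moment_uniform_bound_general
    (n d : ℕ)
    (L : MvPolynomial (Fin n) ℝ →ₗ[ℝ] ℝ)
    (hmom : ∀ q : MvPolynomial (Fin n) ℝ, q.totalDegree ≤ d → 0 ≤ L (q ^ 2))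
    (α : Fin n →₀ ℕ) (hα : (α.sum fun _ e => e) ≤ 2 * d) :
    |L (MvPolynomial.monomial α 1)| ≤
      (insert (L 1)
        (Finset.image (fun i : Fin n => L (MvPolynomial.X i ^ (2 * d)))
          Finset.univ)).max' (Finset.insert_nonempty _ _) :=
  abs_map_monomial_le L hmom (Finset.le_max' _ _ (Finset.mem_insert_self _ _))
    (fun i => Finset.le_max' _ _ (Finset.mem_insert_of_mem
      (Finset.mem_image_of_mem (fun i => L (X i ^ (2 * d))) (Finset.mem_univ i)))) hα

/-- If the degree-`d` moment matrix of a linear functional `L` is positive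
semidefinite, then every moment of degree at most `2d` is bounded in absolute
value by `max(L(1), maxᵢ L(wᵢ^{2d}))`. -/
theorem moment_uniform_bound
    (n d : ℕ) (hd : 1 ≤ d)
    (L : MvPolynomial (Fin n) ℝ →ₗ[ℝ] ℝ)
    (hmom : ∀ q : MvPolynomial (Fin n) ℝ, q.totalDegree ≤ d → 0 ≤ L (q ^ 2))
    (α : Fin n →₀ ℕ) (hα : (α.sum fun _ e => e) ≤ 2 * d) :
    |L (MvPolynomial.monomial α 1)| ≤
      (insert (L 1)
        (Finset.image (fun i : Fin n => L (MvPolynomial.X i ^ (2 * d)))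
          Finset.univ)).max' (Finset.insert_nonempty _ _) :=
  moment_uniform_bound_general n d L hmom α hα
end
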